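/- arXiv:1401.8174 — 6 statements merged into one kernel-verified Lean document; each statement's English description precedes it below -/
import Mathlib

section
/- In any path-connected subset of a normed space avoiding pairs of points at positive-integer distance, the diameter is at most 1. -/
/-!
On a connected set the distance to a fixed point `u` takes every value between `0` and
`dist u v`, by the intermediate value theorem. So if two points of `P` were more than `1`
apart, some point of `P` would lie at distance exactly `1` from `u`.
-/

theorem IsPreconnected.exists_dist_eq {α : Type*} [PseudoMetricSpace α] {s : Set α}
    (hs : IsPreconnected s) {u v : α} (hu : u ∈ s) (hv : v ∈ s) {r : ℝ} (hr₀ : 0 ≤ r)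
    (hr : r ≤ dist u v) : ∃ w ∈ s, dist u w = r :=
  hs.intermediate_value hu hv (continuous_const.dist continuous_id).continuousOn
    ⟨by simpa using hr₀, hr⟩

theorem IsPreconnected.ediam_le_of_forall_dist_ne {α : Type*} [PseudoMetricSpace α]
    {s : Set α} (hs : IsPreconnected s) {r : ℝ} (hr₀ : 0 ≤ r)
    (hr : ∀ u ∈ s, ∀ v ∈ s, dist u v ≠ r) : Metric.ediam s ≤ ENNReal.ofReal r := by
  refine Metric.ediam_le fun u hu v hv ↦ ?_
  rw [edist_dist]
  refine ENNReal.ofReal_le_ofReal (not_lt.mp fun hlt ↦ ?_)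
  obtain ⟨w, hw, huw⟩ := hs.exists_dist_eq hu hv hr₀ hlt.le
  exact hr u hu w hw huw

theorem stmt_1_general {X : Type*} [NormedAddCommGroup X]
    (P : Set X) (hP : IsPathConnected P)
    (havoid : ∀ u ∈ P, ∀ v ∈ P, ¬∃ n : ℕ, 0 < n ∧ ‖u - v‖ = n) :
    EMetric.diam P ≤ 1 := by
  have hunit : ∀ u ∈ P, ∀ v ∈ P, dist u v ≠ 1 := fun u hu v hv huv ↦
    havoid u hu v hv ⟨1, one_pos, by rw [← dist_eq_norm, huv, Nat.cast_one]⟩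
  have hdiam := hP.isConnected.isPreconnected.ediam_le_of_forall_dist_ne zero_le_one hunit
  rwa [ENNReal.ofReal_one] at hdiam

theorem stmt_1 {X : Type*} [NormedAddCommGroup X] [NormedSpace ℝ X]
    (P : Set X) (hP : IsPathConnected P)
    (havoid : ∀ u ∈ P, ∀ v ∈ P, ¬∃ n : ℕ, 0 < n ∧ ‖u - v‖ = n) :
    EMetric.diam P ≤ 1 :=
  stmt_1_general P hP havoid
end

section
/- The one-dimensional Lebesgue measure of the intersection of a line L with an open set P ⊆ X avoiding integral distances is at most 1. -/
open MeasureTheory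

/-- Blichfeldt's principle on the line, applied to the fundamental domain `(0, T]` of `T ℤ`. -/
theorem Real.volume_le_of_sub_ne_zsmul {S : Set ℝ} {T : ℝ} (hT : 0 < T)
    (hS : NullMeasurableSet S) (hsub : ∀ a ∈ S, ∀ b ∈ S, ∀ n : ℤ, n ≠ 0 → b - a ≠ n • T) :
    volume S ≤ ENNReal.ofReal T := by
  have hdomain := isAddFundamentalDomain_Ioc hT 0
  contrapose! hsub
  have hlt : volume (Set.Ioc 0 (0 + T)) < volume S := by simpa using hsub
  obtain ⟨a, ha, b, hb, ⟨g, hg⟩, hg0, rfl⟩ := hdomain.exists_ne_zero_vadd_eq hS hlt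
  obtain ⟨n, rfl⟩ := AddSubgroup.mem_zmultiples_iff.mp hg
  refine ⟨a, ha, _, hb, n, fun hn => hg0 (by simp [hn]), ?_⟩
  simp [AddSubgroup.vadd_def]

theorem norm_add_smul_sub_add_smul {X : Type*} [NormedAddCommGroup X] [NormedSpace ℝ X]
    {w : X} (hw : ‖w‖ = 1) (u : X) (a b : ℝ) : ‖(u + a • w) - (u + b • w)‖ = |a - b| := by
  rw [add_sub_add_left_eq_sub, ← sub_smul, norm_smul, hw, mul_one, Real.norm_eq_abs]

theorem stmt_4 {X : Type*} [NormedAddCommGroup X] [NormedSpace ℝ X]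
    (P : Set X) (hP : IsOpen P)
    (havoid : ∀ u ∈ P, ∀ v ∈ P, ¬∃ n : ℕ, 0 < n ∧ ‖u - v‖ = n)
    (u w : X) (hw : ‖w‖ = 1) :
    volume {α : ℝ | u + α • w ∈ P} ≤ 1 := by
  have hmeas : MeasurableSet {α : ℝ | u + α • w ∈ P} :=
    (hP.preimage (by fun_prop)).measurableSet
  refine (Real.volume_le_of_sub_ne_zsmul one_pos hmeas.nullMeasurableSet ?_).trans_eq
    ENNReal.ofReal_one
  intro a ha b hb n hn hab
  refine havoid _ hb _ ha ⟨n.natAbs, Int.natAbs_pos.mpr hn, ?_⟩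
  rw [norm_add_smul_sub_add_smul hw, hab, zsmul_one, Nat.cast_natAbs, Int.cast_abs]
end

section
/- Let g(ω) = ∫_0^{arcsin ω} cos^d θ dθ for ω ∈ [0,1] and d ≥ 1. Then the maximum of g(ω₁) + g(ω₂) subject to ω₁, ω₂ ≥ 0 and ω₁ + ω₂ ≤ 1 is attained at ω₁ = ω₂ = 1/2. -/
/-!
The substitution `t = sin θ` turns `g(ω) = ∫₀^{arcsin ω} cos^d θ dθ` into
`∫₀^ω (1 - t²)^{(d-1)/2} dt`. For `d ≥ 1` the integrand is nonnegative and nonincreasing on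
`[0, 1]`, so `g` is monotone and concave there, whence
`g ω₁ + g ω₂ ≤ 2 g ((ω₁ + ω₂) / 2) ≤ 2 g (1 / 2)`.
-/

open Real Set intervalIntegral

theorem ConcaveOn.add_le_two_mul_of_monotoneOn {s : Set ℝ} {F : ℝ → ℝ} (hF : ConcaveOn ℝ s F)
    (hF_mono : MonotoneOn F s) {a b m : ℝ} (ha : a ∈ s) (hb : b ∈ s) (hm : m ∈ s)
    (hab : a + b ≤ 2 * m) : F a + F b ≤ 2 * F m := by
  have hmid : (1 / 2 : ℝ) • a + (1 / 2 : ℝ) • b ∈ s :=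
    hF.1 ha hb (by norm_num) (by norm_num) (by norm_num)
  have hconc := hF.2 ha hb (by norm_num : (0 : ℝ) ≤ 1 / 2) (by norm_num : (0 : ℝ) ≤ 1 / 2)
    (by norm_num)
  have hle := hF_mono hmid hm (by simp only [smul_eq_mul]; linarith)
  simp only [smul_eq_mul] at hconc hle
  linarith

section IntegralOfContinuous

variable {f : ℝ → ℝ} {s : Set ℝ}

theorem Continuous.concaveOn_integral_of_antitoneOn (hf : Continuous f) (a : ℝ)
    (hs : Convex ℝ s) (hf_anti : AntitoneOn f s) :
    ConcaveOn ℝ s (fun u => ∫ x in a..u, f x) := by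
  refine AntitoneOn.concaveOn_of_deriv hs ?_ ?_ ?_
  · exact (differentiable_integral_of_continuous hf).continuous.continuousOn
  · exact differentiableOn_integral_of_continuous hf
  · rw [funext (hf.deriv_integral f a)]
    exact hf_anti.mono interior_subset

theorem Continuous.monotoneOn_integral_of_nonneg (hf : Continuous f) (a : ℝ)
    (hs : Convex ℝ s) (hf_nonneg : ∀ x ∈ s, 0 ≤ f x) :
    MonotoneOn (fun u => ∫ x in a..u, f x) s := by
  refine monotoneOn_of_deriv_nonneg hs ?_ ?_ ?_
  · exact (differentiable_integral_of_continuous hf).continuous.continuousOn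
  · exact differentiableOn_integral_of_continuous hf
  · exact fun u hu => hf.deriv_integral f a u ▸ hf_nonneg u (interior_subset hu)

end IntegralOfContinuous

theorem integral_cos_pow_succ_arcsin (e : ℕ) {ω : ℝ} (hω₀ : -1 ≤ ω) (hω₁ : ω ≤ 1) :
    ∫ θ in (0 : ℝ)..arcsin ω, cos θ ^ (e + 1) = ∫ t in (0 : ℝ)..ω, √(1 - t ^ 2) ^ e := by
  have hsubst := integral_comp_mul_deriv (a := 0) (b := arcsin ω)
    (fun θ _ => hasDerivAt_sin θ) continuous_cos.continuousOn
    (g := fun t => √(1 - t ^ 2) ^ e) (by fun_prop)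
  rw [sin_zero, sin_arcsin hω₀ hω₁] at hsubst
  rw [← hsubst]
  refine integral_congr fun θ hθ => ?_
  have hθ_mem : θ ∈ Icc (-(π / 2)) (π / 2) :=
    uIcc_subset_Icc ⟨by linarith [pi_pos], by linarith [pi_pos]⟩
      ⟨neg_pi_div_two_le_arcsin ω, arcsin_le_pi_div_two ω⟩ hθ
  rw [Function.comp_apply, ← cos_sq', sqrt_sq (cos_nonneg_of_mem_Icc hθ_mem), pow_succ]

theorem antitoneOn_sqrt_one_sub_sq_pow (e : ℕ) :
    AntitoneOn (fun t : ℝ => √(1 - t ^ 2) ^ e) (Icc 0 1) :=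
  fun x hx y _ hxy => pow_le_pow_left₀ (sqrt_nonneg _) (sqrt_le_sqrt (by nlinarith [hx.1])) e

theorem stmt_12 (d : ℕ) (hd : 1 ≤ d) (ω₁ ω₂ : ℝ) (h₁ : 0 ≤ ω₁) (h₂ : 0 ≤ ω₂)
    (hsum : ω₁ + ω₂ ≤ 1) :
    (∫ θ in (0 : ℝ)..Real.arcsin ω₁, Real.cos θ ^ d) +
      (∫ θ in (0 : ℝ)..Real.arcsin ω₂, Real.cos θ ^ d) ≤
    2 * ∫ θ in (0 : ℝ)..Real.arcsin (1 / 2), Real.cos θ ^ d := by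
  obtain ⟨e, rfl⟩ : ∃ e, d = e + 1 := ⟨d - 1, by omega⟩
  rw [integral_cos_pow_succ_arcsin e (by linarith) (by linarith),
    integral_cos_pow_succ_arcsin e (by linarith) (by linarith),
    integral_cos_pow_succ_arcsin e (by norm_num) (by norm_num)]
  have hf : Continuous fun t : ℝ => √(1 - t ^ 2) ^ e := by fun_prop
  exact (hf.concaveOn_integral_of_antitoneOn 0 (convex_Icc 0 1)
      (antitoneOn_sqrt_one_sub_sq_pow e)).add_le_two_mul_of_monotoneOn
    (hf.monotoneOn_integral_of_nonneg 0 (convex_Icc 0 1) fun _ _ => by positivity)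
    ⟨h₁, by linarith⟩ ⟨h₂, by linarith⟩ ⟨by norm_num, by norm_num⟩ (by linarith)
end

section
/- Let a be a point of a truncated ball centered at the origin (so ‖a‖_p < (1−ε)/2 and |a_1| < (1/2 − ε)/2) and b a point of a translated copy with center at (k + 1/2 − ε, 0, …, 0) (so ‖b − c‖_p < (1−ε)/2 and |b_1 − c_1| < (1/2−ε)/2). Then k − 1 < ‖a − b‖_p and ‖a−b‖_p < ((1−ε)^p(d−1) + (k+1−2ε)^p)^{1/p}. In particular, for k large enough, ‖a − b‖_p is not a positive integer. -/
/-!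
On the first coordinate `b` exceeds `a` by more than `k`, which bounds `‖a - b‖_p` below by `k`.
Coordinatewise `|a₁ - b₁| < k + 1 - 2ε` and `|aᵢ - bᵢ| < 1 - ε` for `i ≠ 1`, which gives the upper
bound. With `y = k + 1 - 2ε`, Bernoulli's inequality `(y + 2ε)^p ≥ y^p + 2pε y^(p-1)` shows that for
large `k` the upper bound is at most `k + 1`, so `‖a - b‖_p` lies strictly between `k` and `k + 1`.
-/

/-- The ℓ^p "norm" as an explicit expression on ℝ^d. -/
noncomputable def lpNorm (d : ℕ) (p : ℝ) (x : Fin d → ℝ) : ℝ :=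
  (∑ i, |x i| ^ p) ^ (1 / p)

/-- The center `(k + 1/2 − ε, 0, …, 0)` of the translated truncated ball. -/
noncomputable def transCenter (d : ℕ) (k : ℕ) (ε : ℝ) : Fin d → ℝ :=
  fun i => if (i : ℕ) = 0 then (k : ℝ) + 1 / 2 - ε else 0

open Filter

section lpNorm

variable {d : ℕ} {p : ℝ}

lemma abs_le_lpNorm (hp : 0 < p) (x : Fin d → ℝ) (i : Fin d) : |x i| ≤ lpNorm d p x := by
  calc |x i| = (|x i| ^ p) ^ (1 / p) := by
        rw [one_div, Real.rpow_rpow_inv (abs_nonneg _) hp.ne']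
    _ ≤ lpNorm d p x := by
        unfold lpNorm
        gcongr
        exact Finset.single_le_sum (f := fun j => |x j| ^ p) (fun j _ => by positivity)
          (Finset.mem_univ i)

lemma lpNorm_lt_of_abs_lt (hp : 0 < p) {x : Fin d → ℝ} {r s : ℝ} (z : Fin d)
    (hz : |x z| < r) (hne : ∀ i ≠ z, |x i| < s) :
    lpNorm d p x < (s ^ p * (d - 1 : ℝ) + r ^ p) ^ (1 / p) := by
  have hsum : ∑ i, (if i = z then r ^ p else s ^ p) = s ^ p * (d - 1 : ℝ) + r ^ p := by
    rw [← Finset.add_sum_erase _ _ (Finset.mem_univ z), if_pos rfl,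
      Finset.sum_congr rfl fun i hi => if_neg (Finset.ne_of_mem_erase hi),
      Finset.sum_const, Finset.card_erase_of_mem (Finset.mem_univ z), Finset.card_univ,
      Fintype.card_fin, nsmul_eq_mul, Nat.cast_sub z.pos]
    ring
  have hlt : ∑ i, |x i| ^ p < ∑ i, (if i = z then r ^ p else s ^ p) := by
    refine Finset.sum_lt_sum_of_nonempty ⟨z, Finset.mem_univ z⟩ fun i _ => ?_
    split_ifs with hi
    · subst hi; gcongr
    · exact Real.rpow_lt_rpow (abs_nonneg _) (hne i hi) hp
  unfold lpNorm
  rw [← hsum]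
  gcongr

end lpNorm

lemma transCenter_of_ne_zero {d k : ℕ} {ε : ℝ} {i : Fin d} (hi : (i : ℕ) ≠ 0) :
    transCenter d k ε i = 0 :=
  if_neg hi

section TruncatedBalls

variable {d k : ℕ} {p ε : ℝ} {a b : Fin d → ℝ} (i₀ : Fin d)

lemma lt_lpNorm_sub (hp : 0 < p) (ha : |a i₀| < (1 / 2 - ε) / 2)
    (hb : |b i₀ - ((k : ℝ) + 1 / 2 - ε)| < (1 / 2 - ε) / 2) :
    (k : ℝ) < lpNorm d p (a - b) := by
  rw [abs_lt] at ha hb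
  calc (k : ℝ) < b i₀ - a i₀ := by linarith
    _ ≤ |(a - b) i₀| := by rw [Pi.sub_apply, abs_sub_comm]; exact le_abs_self _
    _ ≤ lpNorm d p (a - b) := abs_le_lpNorm hp _ _

lemma lpNorm_sub_lt (h₀ : (i₀ : ℕ) = 0) (hp : 0 < p) (ha : lpNorm d p a < (1 - ε) / 2)
    (ha₀ : |a i₀| < (1 / 2 - ε) / 2) (hb : lpNorm d p (b - transCenter d k ε) < (1 - ε) / 2)
    (hb₀ : |b i₀ - ((k : ℝ) + 1 / 2 - ε)| < (1 / 2 - ε) / 2) :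
    lpNorm d p (a - b) < ((1 - ε) ^ p * (d - 1 : ℝ) + ((k : ℝ) + 1 - 2 * ε) ^ p) ^ (1 / p) := by
  refine lpNorm_lt_of_abs_lt hp i₀ ?_ fun i hi => ?_
  · rw [abs_lt] at ha₀ hb₀ ⊢
    constructor <;> simp only [Pi.sub_apply] <;> linarith
  · have hb_i : |b i| ≤ lpNorm d p (b - transCenter d k ε) := by
      simpa [transCenter_of_ne_zero (fun h => hi (Fin.ext (h.trans h₀.symm)))]
        using abs_le_lpNorm hp (b - transCenter d k ε) i
    calc |(a - b) i| ≤ |a i| + |b i| := abs_sub _ _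
      _ < 1 - ε := by linarith [abs_le_lpNorm hp a i]

end TruncatedBalls

lemma rpow_add_mul_rpow_sub_one_le {y δ p : ℝ} (hy : 0 < y) (hδ : 0 ≤ δ) (hp : 1 ≤ p) :
    y ^ p + p * y ^ (p - 1) * δ ≤ (y + δ) ^ p := by
  calc y ^ p + p * y ^ (p - 1) * δ = y ^ p * (1 + p * (δ / y)) := by
        rw [Real.rpow_sub_one hy.ne']; field_simp
    _ ≤ y ^ p * (1 + δ / y) ^ p := by
        gcongr; exact one_add_mul_self_le_rpow_one_add (by linarith [div_nonneg hδ hy.le]) hp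
    _ = (y + δ) ^ p := by
        rw [← Real.mul_rpow hy.le (by positivity)]; congr 1; field_simp

lemma eventually_add_rpow_sub_rpow_inv_le {p C δ : ℝ} (hp : 1 < p) (hC : 0 ≤ C) (hδ : 0 < δ) :
    ∀ᶠ y in atTop, (C + (y - δ) ^ p) ^ (1 / p) ≤ y := by
  have hshift : Tendsto (fun y : ℝ => y - δ) atTop atTop := by
    exact (tendsto_atTop_add_const_right _ (-δ) tendsto_id).congr fun y => (sub_eq_add_neg y δ).symm
  filter_upwards [hshift.eventually_gt_atTop 0,
    ((tendsto_rpow_atTop (sub_pos.2 hp)).comp hshift).eventually_ge_atTop (C / (p * δ))]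
    with y hy hyC
  have hpδ : 0 < p * δ := by positivity
  have hC' : C ≤ p * (y - δ) ^ (p - 1) * δ := by
    rw [Function.comp_apply, div_le_iff₀ hpδ] at hyC; linarith
  calc (C + (y - δ) ^ p) ^ (1 / p) ≤ ((y - δ + δ) ^ p) ^ (1 / p) := by
        gcongr
        linarith [rpow_add_mul_rpow_sub_one_le hy hδ.le hp.le]
    _ = y := by rw [sub_add_cancel, one_div, Real.rpow_rpow_inv (by linarith) (by linarith)]

theorem stmt_16 (d : ℕ) (hd : 2 ≤ d) (p ε : ℝ) (hp : 1 < p)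
    (hε : 0 < ε) (hε2 : ε < 1 / 4) :
    (∀ k : ℕ, 0 < k → ∀ a b : Fin d → ℝ,
      lpNorm d p a < (1 - ε) / 2 → |a ⟨0, by omega⟩| < (1 / 2 - ε) / 2 →
      lpNorm d p (b - transCenter d k ε) < (1 - ε) / 2 →
      |b ⟨0, by omega⟩ - ((k : ℝ) + 1 / 2 - ε)| < (1 / 2 - ε) / 2 →
      (k : ℝ) - 1 < lpNorm d p (a - b) ∧
        lpNorm d p (a - b) <
          ((1 - ε) ^ p * (d - 1 : ℝ) + ((k : ℝ) + 1 - 2 * ε) ^ p) ^ (1 / p)) ∧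
    (∃ K : ℕ, ∀ k : ℕ, K ≤ k → ∀ a b : Fin d → ℝ,
      lpNorm d p a < (1 - ε) / 2 → |a ⟨0, by omega⟩| < (1 / 2 - ε) / 2 →
      lpNorm d p (b - transCenter d k ε) < (1 - ε) / 2 →
      |b ⟨0, by omega⟩ - ((k : ℝ) + 1 / 2 - ε)| < (1 / 2 - ε) / 2 →
      ¬∃ m : ℕ, 0 < m ∧ lpNorm d p (a - b) = m) := by
  have hp₀ : 0 < p := zero_lt_one.trans hp
  refine ⟨fun k _ a b ha ha₀ hb hb₀ => ⟨?_, lpNorm_sub_lt _ rfl hp₀ ha ha₀ hb hb₀⟩, ?_⟩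
  · linarith [lt_lpNorm_sub _ hp₀ ha₀ hb₀]
  have hC : 0 ≤ (1 - ε) ^ p * (d - 1 : ℝ) := by
    have : (2 : ℝ) ≤ d := by exact_mod_cast hd
    exact mul_nonneg (Real.rpow_nonneg (by linarith) p) (by linarith)
  obtain ⟨K, hK⟩ := eventually_atTop.1 <|
    (tendsto_atTop_add_const_right _ 1 tendsto_natCast_atTop_atTop).eventually
      (eventually_add_rpow_sub_rpow_inv_le hp hC (by positivity : 0 < 2 * ε))
  refine ⟨K, fun k hk a b ha ha₀ hb hb₀ ⟨m, _, hm⟩ => ?_⟩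
  have hkm : (k : ℝ) < m := hm ▸ lt_lpNorm_sub _ hp₀ ha₀ hb₀
  have hmk : (m : ℝ) < k + 1 := hm ▸ (lpNorm_sub_lt _ rfl hp₀ ha ha₀ hb hb₀).trans_le (hK k hk)
  norm_cast at hkm hmk
  omega
end

section
/- Let p be an odd prime and ζ_j = exp(πij/p) the 2p-th roots of unity. Set α_j = (ζ_j − ζ_{2p−j})/i = 2 sin(jπ/p) for 1 ≤ j ≤ (p−1)/2. Then the numbers α_1, …, α_{(p−1)/2} are irrational and linearly independent over ℚ. -/
/-!
With `ζ = exp (π i / p)`, a primitive `2p`-th root of unity, one has `ζ ^ p = -1` and hence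
`i · 2 sin (jπ/p) = ζ ^ j - ζ ^ (-j) = ζ ^ j + ζ ^ (p - j)`. Since `φ(2p) = p - 1`, the
powers `ζ ^ 0, …, ζ ^ (p - 2)` are linearly independent over `ℚ`, and for `1 ≤ j ≤ (p - 1)/2`
the sums `ζ ^ (j - 1) + ζ ^ (p - 1 - j)` use pairwise disjoint pairs of them, so they are
independent too; multiplying by `-i ζ` gives the numbers `2 sin (jπ/p)`.

Irrationality is Niven's theorem: `0 < jπ/p < π/2` and `jπ/p ≠ π/6` because `p` is odd.
-/

open Real Complex

theorem LinearIndependent.add_comp_of_disjoint {R M ι κ : Type*} [Ring R] [AddCommGroup M]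
    [Module R M] {w : ι → M} (hw : LinearIndependent R w) {σ τ : κ → ι}
    (hσ : σ.Injective) (hτ : τ.Injective) (hστ : ∀ a b, σ a ≠ τ b) :
    LinearIndependent R (fun k => w (σ k) + w (τ k)) := by
  have hu := hw.comp _ (hσ.sumElim hτ hστ)
  rw [linearIndependent_iff'] at hu ⊢
  intro s g hg k hk
  simpa using hu (s.disjSum s) (Sum.elim g g)
    (by simpa [Finset.sum_disjSum, smul_add, Finset.sum_add_distrib] using hg) (.inl k)
    (Finset.inl_mem_disjSum.mpr hk)

theorem IsPrimitiveRoot.linearIndependent_rat_pow {K : Type*} [Field K] [CharZero K] {ζ : K}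
    {n : ℕ} (hζ : IsPrimitiveRoot ζ n) (hn : 0 < n) :
    LinearIndependent ℚ (fun i : Fin n.totient => ζ ^ (i : ℕ)) := by
  have h := linearIndependent_pow (K := ℚ) ζ
  rwa [← Polynomial.cyclotomic_eq_minpoly_rat hζ hn, Polynomial.natDegree_cyclotomic] at h

theorem linearIndependent_rat_exp_pi_mul_I_div_pow {p : ℕ} (hp : p.Prime) (hodd : Odd p) :
    LinearIndependent ℚ (fun i : Fin (p - 1) => exp (π * I / p) ^ (i : ℕ)) := by
  have hζ : IsPrimitiveRoot (exp (π * I / p)) (2 * p) := by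
    convert Complex.isPrimitiveRoot_exp (2 * p) (by simp [hp.ne_zero]) using 2
    push_cast
    field_simp
  have h := hζ.linearIndependent_rat_pow (by simp [hp.pos])
  rwa [Nat.totient_two_mul_of_odd hodd, Nat.totient_prime hp] at h

theorem two_mul_sin_natCast_mul_pi_div {p j : ℕ} (hp : p ≠ 0) (hj : j ≤ p) :
    ((2 * Real.sin (j * π / p) : ℝ) : ℂ) =
      -I * (exp (π * I / p) ^ j + exp (π * I / p) ^ (p - j)) := by
  have hpc : (p : ℂ) ≠ 0 := Nat.cast_ne_zero.mpr hp
  have hpow (n : ℕ) : exp (π * I / p) ^ n = exp (n * π / p * I) := by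
    rw [← Complex.exp_nat_mul]
    ring_nf
  have hpow_sub : exp (π * I / p) ^ (p - j) = -exp (-(j * π / p) * I) := by
    rw [hpow, Nat.cast_sub hj, show ((p : ℂ) - j) * π / p * I = π * I + -(j * π / p) * I by
      field_simp; ring, Complex.exp_add, exp_pi_mul_I]
    ring
  push_cast
  rw [two_sin, hpow_sub, hpow]
  ring

theorem irrational_sin_natCast_mul_pi_div {p j : ℕ} (hp : Odd p) (hj : 0 < j) (hjp : 2 * j < p) :
    Irrational (Real.sin (j * π / p)) := by
  have hp0 : (0 : ℝ) < p := by exact_mod_cast hp.pos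
  have hjp' : (2 * j : ℝ) < p := by exact_mod_cast hjp
  set θ := j * π / p with hθ
  have hθ0 : 0 < θ := by positivity
  have hθ1 : θ < π / 2 := by
    rw [hθ, div_lt_div_iff₀ hp0 two_pos]
    nlinarith [pi_pos]
  have hmem : θ ∈ Set.Icc (-(π / 2)) (π / 2) := ⟨by linarith, hθ1.le⟩
  have hsin0 : 0 < Real.sin θ := sin_pos_of_pos_of_lt_pi hθ0 (by linarith [pi_pos])
  have hsin1 : Real.sin θ < 1 := by
    simpa using strictMonoOn_sin hmem ⟨by linarith [pi_pos], le_rfl⟩ hθ1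
  have hsin_half : Real.sin θ ≠ 1 / 2 := by
    intro h
    have h6 : θ = π / 6 := injOn_sin hmem ⟨by linarith [pi_pos], by linarith [pi_pos]⟩
      (by rw [h, sin_pi_div_six])
    have : (6 * j : ℝ) = p := by
      rw [hθ, div_eq_div_iff hp0.ne' (by norm_num)] at h6
      nlinarith [pi_pos]
    have : 6 * j = p := by exact_mod_cast this
    exact Nat.not_even_iff_odd.mpr hp ⟨3 * j, by omega⟩
  rintro ⟨q, hq⟩
  rcases niven_sin ⟨j / p, by rw [hθ]; push_cast; ring⟩ ⟨q, hq.symm⟩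
    with h | h | h | h | (h : _ = _) <;>
    first | exact hsin_half h | linarith

theorem stmt_17 (p : ℕ) (hp : p.Prime) (hodd : Odd p) :
    (∀ j : ℕ, 1 ≤ j → j ≤ (p - 1) / 2 → Irrational (2 * Real.sin (j * Real.pi / p))) ∧
    LinearIndependent ℚ (fun j : Fin ((p - 1) / 2) =>
      (2 * Real.sin (((j : ℕ) + 1) * Real.pi / p) : ℝ)) := by
  refine ⟨fun j hj hjp => ?_, ?_⟩
  · exact_mod_cast (irrational_sin_natCast_mul_pi_div hodd hj (by omega)).natCast_mul two_ne_zero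
  set ζ := exp (π * I / p)
  have hle : (p - 1) / 2 ≤ p - 1 := by omega
  have hsums := (linearIndependent_rat_exp_pi_mul_I_div_pow hp hodd).add_comp_of_disjoint
    (Fin.castLE_injective hle) (Fin.rev_injective.comp (Fin.castLE_injective hle))
    fun a b h => by
      rw [Fin.ext_iff] at h
      simp only [Function.comp_apply, Fin.val_castLE, Fin.val_rev] at h
      omega
  have hα : (fun j : Fin ((p - 1) / 2) => ((2 * Real.sin ((j + 1) * π / p) : ℝ) : ℂ)) =
      LinearMap.mulLeft ℚ (-I * ζ) ∘
        fun k => ζ ^ (Fin.castLE hle k : ℕ) + ζ ^ (Fin.rev (Fin.castLE hle k) : ℕ) := by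
    funext j
    have key := two_mul_sin_natCast_mul_pi_div hp.ne_zero (j := j + 1) (by omega)
    rw [show p - (j + 1) = (p - 1 - (j + 1)) + 1 by omega, pow_succ, pow_succ] at key
    push_cast at key
    simp only [Function.comp_apply, LinearMap.mulLeft_apply, Fin.val_rev, Fin.val_castLE]
    push_cast
    rw [key]
    ring
  refine .of_comp (ofRealAm.restrictScalars ℚ).toLinearMap ?_
  show LinearIndependent ℚ
    fun j : Fin ((p - 1) / 2) => ((2 * Real.sin ((j + 1) * π / p) : ℝ) : ℂ)
  rw [hα]
  exact hsums.map' _ (LinearMap.ker_eq_bot.mpr (mul_right_injective₀ (by simp [ζ])))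
end

section
/- If Q is a finite set of points in Euclidean space ℝ^d such that all pairwise distances are odd integers, then |Q| ≤ d + 2. -/
/-!
Fix one point `o` of an odd-distance set and look at the vectors `p - o` to the others. By the
polarization identity twice their Gram matrix is an integer matrix, congruent mod 2 to `J - I`
(`J` the all-ones matrix), because odd squares are odd. When the number `m` of vectors is even,
`(J - I)² = I` over `ZMod 2`, so the Gram determinant is odd, hence nonzero, and the vectors are
linearly independent: `m ≤ d`. But `d + 3` points would give `o` and an even number `m ≥ d + 1`
of others.
-/

open Matrix
open scoped RealInnerProductSpace

theorem Matrix.det_offDiagOnes_zmod_two_ne_zero {ι : Type*} [Fintype ι] [DecidableEq ι]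
    (hι : Even (Fintype.card ι)) :
    (of fun i j : ι => if i = j then (0 : ZMod 2) else 1).det ≠ 0 := by
  set J : Matrix ι ι (ZMod 2) := of fun _ _ => 1
  have hJ_sq : J * J = 0 := by
    ext i j
    simp [J, Matrix.mul_apply, (ZMod.natCast_eq_zero_iff_even).2 hι]
  have hJ_add : J + J = 0 := by
    ext i j
    exact CharTwo.add_self_eq_zero (1 : ZMod 2)
  have hA : (of fun i j : ι => if i = j then (0 : ZMod 2) else 1) = J - 1 := by
    ext i j
    by_cases hij : i = j <;> simp [J, hij]
  refine hA ▸ det_ne_zero_of_left_inverse (B := J - 1) ?_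
  calc (J - 1) * (J - 1) = J * J - (J + J) + 1 := by noncomm_ring
    _ = 1 := by rw [hJ_sq, hJ_add, sub_zero, zero_add]

theorem two_mul_inner_sub_sub {E : Type*} [NormedAddCommGroup E] [InnerProductSpace ℝ E]
    (o x y : E) : 2 * ⟪x - o, y - o⟫ = dist x o ^ 2 + dist y o ^ 2 - dist x y ^ 2 := by
  have h := norm_sub_sq_real (x - o) (y - o)
  rw [sub_sub_sub_cancel_right] at h
  rw [dist_eq_norm, dist_eq_norm, dist_eq_norm, h]
  ring

def IsOddDistanceSet {X : Type*} [PseudoMetricSpace X] (s : Set X) : Prop :=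
  ∀ x ∈ s, ∀ y ∈ s, x ≠ y → ∃ m : ℕ, Odd m ∧ dist x y = m

-- For points at integral distances this is twice the Gram matrix of the vectors `p i - o`.
noncomputable def intDoubleGram {X ι : Type*} [PseudoMetricSpace X] (o : X) (p : ι → X) :
    Matrix ι ι ℤ :=
  of fun i j => (⌊dist (p i) o⌋₊ : ℤ) ^ 2 + (⌊dist (p j) o⌋₊ : ℤ) ^ 2 - (⌊dist (p i) (p j)⌋₊ : ℤ) ^ 2

namespace IsOddDistanceSet

section PseudoMetricSpace

variable {X ι : Type*} [PseudoMetricSpace X] {s : Set X} {x y o : X} {p : ι → X}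

theorem natCast_floor_dist (hs : IsOddDistanceSet s) (hx : x ∈ s) (hy : y ∈ s) :
    (⌊dist x y⌋₊ : ℝ) = dist x y := by
  by_cases hxy : x = y
  · simp [hxy]
  · obtain ⟨m, -, hm⟩ := hs x hx y hy hxy
    rw [hm, Nat.floor_natCast]

theorem floor_dist_cast_zmod_two (hs : IsOddDistanceSet s) (hx : x ∈ s) (hy : y ∈ s)
    (hxy : x ≠ y) : (⌊dist x y⌋₊ : ZMod 2) = 1 := by
  obtain ⟨m, hm, hdist⟩ := hs x hx y hy hxy
  rw [hdist, Nat.floor_natCast, ZMod.natCast_eq_one_iff_odd]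
  exact hm

theorem map_intDoubleGram_zmod_two [DecidableEq ι] (hs : IsOddDistanceSet s)
    (ho : o ∈ s) (hp : ∀ i, p i ∈ s) (hpo : ∀ i, p i ≠ o) (hinj : Function.Injective p) :
    (intDoubleGram o p).map (Int.cast : ℤ → ZMod 2) = of fun i j => if i = j then 0 else 1 := by
  ext i j
  simp only [intDoubleGram, map_apply, of_apply]
  push_cast
  rw [hs.floor_dist_cast_zmod_two (hp i) ho (hpo i), hs.floor_dist_cast_zmod_two (hp j) ho (hpo j)]
  by_cases hij : i = j
  · rw [hij, dist_self, Nat.floor_zero, if_pos rfl]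
    rfl
  · rw [hs.floor_dist_cast_zmod_two (hp i) (hp j) (hinj.ne hij), if_neg hij]
    rfl

end PseudoMetricSpace

variable {E ι : Type*} [NormedAddCommGroup E] [InnerProductSpace ℝ E] {s : Set E} {o : E}
  {p : ι → E}

theorem map_intDoubleGram_real (hs : IsOddDistanceSet s) (ho : o ∈ s) (hp : ∀ i, p i ∈ s) :
    (intDoubleGram o p).map (Int.cast : ℤ → ℝ) = (2 : ℝ) • gram ℝ (fun i => p i - o) := by
  ext i j
  simp only [intDoubleGram, map_apply, of_apply, Matrix.smul_apply, gram_apply, smul_eq_mul]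
  push_cast
  rw [hs.natCast_floor_dist (hp i) ho, hs.natCast_floor_dist (hp j) ho,
    hs.natCast_floor_dist (hp i) (hp j), two_mul_inner_sub_sub]

theorem linearIndependent_sub [Fintype ι] (hι : Even (Fintype.card ι))
    (hs : IsOddDistanceSet s) (ho : o ∈ s) (hp : ∀ i, p i ∈ s) (hpo : ∀ i, p i ≠ o)
    (hinj : Function.Injective p) : LinearIndependent ℝ fun i => p i - o := by
  classical
  apply linearIndependent_of_det_gram_ne_zero
  have hZ : (intDoubleGram o p).det ≠ 0 := fun h0 =>
    det_offDiagOnes_zmod_two_ne_zero hι <| by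
      rw [← hs.map_intDoubleGram_zmod_two ho hp hpo hinj, ← Int.cast_det, h0, Int.cast_zero]
  have hR : ((2 : ℝ) • gram ℝ fun i => p i - o).det ≠ 0 := by
    rw [← hs.map_intDoubleGram_real ho hp, ← Int.cast_det]
    exact_mod_cast hZ
  rw [det_smul] at hR
  exact right_ne_zero_of_mul hR

theorem card_le [FiniteDimensional ℝ E] {Q : Finset E} (hQ : IsOddDistanceSet (Q : Set E)) :
    Q.card ≤ Module.finrank ℝ E + 2 := by
  classical
  by_contra! hcard
  obtain ⟨o, ho⟩ : Q.Nonempty := Finset.card_pos.1 (by omega)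
  set n := Module.finrank ℝ E
  obtain ⟨S, hSQ, hS⟩ : ∃ S ⊆ Q.erase o, S.card = n + 2 - n % 2 :=
    Finset.exists_subset_card_eq (by rw [Finset.card_erase_of_mem ho]; omega)
  have hmem : ∀ x ∈ S, x ∈ Q ∧ x ≠ o := fun x hx => (Finset.mem_erase.1 (hSQ hx)).symm
  have hli := hQ.linearIndependent_sub (p := ((↑) : S → E))
    (by rw [Fintype.card_coe, hS, Nat.even_iff]; omega) ho (fun x => (hmem x x.2).1)
    (fun x => (hmem x x.2).2) Subtype.val_injective
  have := hli.fintype_card_le_finrank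
  rw [Fintype.card_coe, hS] at this
  omega

end IsOddDistanceSet

theorem stmt_19 (d : ℕ) (Q : Finset (EuclideanSpace ℝ (Fin d)))
    (h : ∀ q ∈ Q, ∀ q' ∈ Q, q ≠ q' → ∃ m : ℕ, Odd m ∧ dist q q' = m) :
    Q.card ≤ d + 2 := by
  simpa using IsOddDistanceSet.card_le h
end
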